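/- arXiv:1311.6988 — 2 statements merged into one kernel-verified Lean document; each statement's English description precedes it below -/
import Mathlib

section
/- For every e : ℕ → ℕ → ℕ there exists B : List Bool → Bool such that: (a) if for every γ : ℕ → Bool there exists n with b2n (γ n) ∈ E n e, then B is a bar in Cantor space; and (b) for every m, if Sec m [] holds for B, then there exists n with 0 ∈ E n e and 1 ∈ E n e. (Lemma 5.1(i): the reduction showing FT implies Σ⁰₁-Contr(AC₀,₀^{<2}), i.e. that positively inseparable enumerable subsets of ℕ intersect, and that a counterexample yields Kleene's Alternative.) -/
/-- The first `n` values of `γ` as a list. -/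
def seg (γ : ℕ → Bool) (n : ℕ) : List Bool := List.ofFn fun i : Fin n => γ i

/-- `Sec B n s`: the finite sequence `s` is `n`-secured by the bar `B`. -/
def Sec (B : List Bool → Bool) : ℕ → List Bool → Prop
  | 0, s => ∃ n ≤ s.length, B (s.take n) = true
  | k + 1, s => Sec B k (s ++ [false]) ∧ Sec B k (s ++ [true])

/-- The `n`-th set enumerated by `e`. -/
def E (n : ℕ) (e : ℕ → ℕ → ℕ) : Set ℕ := {k | ∃ p, e n p = k + 1}

/-- Conversion of a bit to a natural number. -/
def b2n (b : Bool) : ℕ := if b then 1 else 0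

/-!
A node `s` is barred once some position `n < |s|` is refuted within `|s|` steps, i.e. the
enumeration of `E n` has listed the bit `s n` by stage `|s|`. If every `γ` has a position `n`
with `γ n ∈ E n`, every path is eventually barred. Conversely, if `Sec B m []`, then every node
of length `m` has a barred prefix; apply this to the path `γ n := (0 appears in E n by stage m)`.
A refuted position `n` cannot have `γ n = false`, since then `0 = b2n (γ n) ∈ E n` by stage `m`
would force `γ n = true`; so `γ n = true`, and `E n` contains both `0` and `1`.
-/

@[simp]
lemma b2n_true : b2n true = 1 := rfl

@[simp]
lemma b2n_false : b2n false = 0 := rfl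

@[simp]
lemma seg_length (γ : ℕ → Bool) (n : ℕ) : (seg γ n).length = n := by
  simp [seg]

lemma seg_getD (γ : ℕ → Bool) {n i : ℕ} (h : i < n) : (seg γ n).getD i false = γ i := by
  simp [seg, h]

lemma seg_take (γ : ℕ → Bool) {n m : ℕ} (h : n ≤ m) : (seg γ m).take n = seg γ n := by
  apply List.ext_getElem
  · simp [h]
  · intro i _ _
    simp [seg]

lemma Sec.zero_append {B : List Bool → Bool} {k : ℕ} {s : List Bool} (hs : Sec B k s)
    {l : List Bool} (hl : l.length = k) : Sec B 0 (s ++ l) := by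
  induction k generalizing s l with
  | zero => simpa [List.length_eq_zero_iff.mp hl] using hs
  | succ k ih =>
    obtain _ | ⟨b, l⟩ := l
    · simp at hl
    · have hsb : Sec B k (s ++ [b]) := by cases b <;> [exact hs.1; exact hs.2]
      simpa using ih hsb (by simpa using hl : l.length = k)

lemma Sec.exists_seg_of_nil {B : List Bool → Bool} {m : ℕ} (h : Sec B m []) (γ : ℕ → Bool) :
    ∃ n ≤ m, B (seg γ n) = true := by
  obtain ⟨n, hn, hB⟩ := Sec.zero_append h (seg_length γ m)
  rw [List.nil_append, seg_length] at hn
  exact ⟨n, hn, by rwa [List.nil_append, seg_take γ hn] at hB⟩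

def refutedBar (e : ℕ → ℕ → ℕ) (s : List Bool) : Bool :=
  decide (∃ n < s.length, ∃ p ≤ s.length, e n p = b2n (s.getD n false) + 1)

lemma refutedBar_seg_iff (e : ℕ → ℕ → ℕ) (γ : ℕ → Bool) (N : ℕ) :
    refutedBar e (seg γ N) = true ↔ ∃ n < N, ∃ p ≤ N, e n p = b2n (γ n) + 1 := by
  simp only [refutedBar, decide_eq_true_iff, seg_length]
  refine exists_congr fun n => and_congr_right fun hn => ?_
  rw [seg_getD γ hn]

lemma refutedBar_isBar (e : ℕ → ℕ → ℕ) (h : ∀ γ : ℕ → Bool, ∃ n, b2n (γ n) ∈ E n e)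
    (γ : ℕ → Bool) : ∃ N, refutedBar e (seg γ N) = true := by
  obtain ⟨n, p, hp⟩ := h γ
  exact ⟨max (n + 1) p, (refutedBar_seg_iff e γ _).mpr ⟨n, by omega, p, by omega, hp⟩⟩

lemma exists_zero_one_mem_of_sec_refutedBar (e : ℕ → ℕ → ℕ) {m : ℕ}
    (h : Sec (refutedBar e) m []) : ∃ n, 0 ∈ E n e ∧ 1 ∈ E n e := by
  let γ : ℕ → Bool := fun n => decide (∃ p ≤ m, e n p = 1)
  obtain ⟨N, hN, hB⟩ := h.exists_seg_of_nil γ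
  obtain ⟨n, -, p, hp, hnp⟩ := (refutedBar_seg_iff e γ N).mp hB
  cases hγ : γ n
  · have : γ n = true := decide_eq_true ⟨p, by omega, by simpa [hγ] using hnp⟩
    simp [hγ] at this
  · obtain ⟨q, -, hq⟩ := of_decide_eq_true hγ
    exact ⟨n, ⟨q, hq⟩, ⟨p, by simpa [hγ] using hnp⟩⟩

/-- Lemma 5.1(i): the reduction showing FT implies Σ⁰₁-Contr(AC₀,₀^{<2}). -/
theorem ft_implies_sigma01_contr_ac
    (e : ℕ → ℕ → ℕ) :
    ∃ B : List Bool → Bool,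
      ((∀ γ : ℕ → Bool, ∃ n, b2n (γ n) ∈ E n e) →
        ∀ γ : ℕ → Bool, ∃ n, B (seg γ n) = true) ∧
      (∀ m : ℕ, Sec B m [] → ∃ n, (0 : ℕ) ∈ E n e ∧ (1 : ℕ) ∈ E n e) :=
  ⟨refutedBar e, refutedBar_isBar e, fun _ => exists_zero_one_mem_of_sec_refutedBar e⟩
end

section
/- Finite-strategy open determinacy for player II on Cantor space (content of the equivalence FT ↔ Σ⁰₁-*Det^{II}_C in Theorem 9.5; classically valid): for every A : List Bool → Bool, if for every σ : List Bool → Bool there exists δ : ℕ → Bool with δ (2*n) = σ (δ↾(2*n)) for all n and with B-hit ∃ k, A (δ↾k) = true, then there exist m and τ : List Bool → Bool such that every δ : ℕ → Bool with δ (2*n+1) = τ (δ↾(2*n+1)) for all n satisfies ∃ k ≤ m, A (δ↾k) = true. -/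
lemma seg_succ (δ : ℕ → Bool) (n : ℕ) : seg δ (n + 1) = seg δ n ++ [δ n] := by
  rw [seg, List.ofFn_succ', List.concat_eq_append]
  rfl

lemma length_seg (δ : ℕ → Bool) (n : ℕ) : (seg δ n).length = n := by
  simp [seg]

inductive WinsWithin (A : List Bool → Bool) : ℕ → List Bool → Prop
  | hit {n p} : A p = true → WinsWithin A n p
  | moveI {n p} : Even p.length → (∀ b, WinsWithin A n (p ++ [b])) → WinsWithin A (n + 1) p
  | moveII {n p} (b : Bool) : Odd p.length → WinsWithin A n (p ++ [b]) →
      WinsWithin A (n + 1) p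

namespace WinsWithin

variable {A : List Bool → Bool}

lemma mono {m n : ℕ} {p : List Bool} (h : WinsWithin A m p) (hmn : m ≤ n) :
    WinsWithin A n p := by
  induction h generalizing n with
  | hit hA => exact hit hA
  | moveI hp _ ih =>
    obtain ⟨n, rfl⟩ := Nat.exists_eq_add_of_lt hmn
    exact moveI hp fun b => ih b (by omega)
  | moveII b hp _ ih =>
    obtain ⟨n, rfl⟩ := Nat.exists_eq_add_of_lt hmn
    exact moveII b hp (ih (by omega))

lemma monotone (p : List Bool) : Monotone fun n => WinsWithin A n p :=
  fun _ _ hmn h => h.mono hmn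

end WinsWithin

lemma exists_forall_of_monotone_bool {P : ℕ → Bool → Prop} (hP : ∀ b, Monotone (P · b)) :
    ∃ b₀, ∀ n b, P n b → P n b₀ := by
  by_cases hsep : ∃ m, P m true ∧ ¬ P m false
  · obtain ⟨m, hm_true, hm_false⟩ := hsep
    refine ⟨true, fun n b hb => ?_⟩
    cases b with
    | true => exact hb
    | false =>
      have hmn : m ≤ n := by
        by_contra! hnm
        exact hm_false (hP false hnm.le hb)
      exact hP true hmn hm_true
  · push Not at hsep
    refine ⟨false, fun n b hb => ?_⟩
    cases b with
    | true => exact hsep n hb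
    | false => exact hb

section Strategies

variable (A : List Bool → Bool)

/-- The move of II's winning strategy. It may not depend on the number of moves left; by
monotonicity in that number a single move serves all of them. -/
noncomputable def winningMove (p : List Bool) : Bool :=
  Classical.choose <| exists_forall_of_monotone_bool fun b => WinsWithin.monotone (A := A) (p ++ [b])

/-- The move of I's strategy, keeping the play out of positions won for II. -/
noncomputable def avoidingMove (p : List Bool) : Bool :=
  open Classical in decide (∃ n, WinsWithin A n (p ++ [false]))

variable {A}

lemma winsWithin_append_winningMove {n : ℕ} {p : List Bool} {b : Bool}
    (h : WinsWithin A n (p ++ [b])) : WinsWithin A n (p ++ [winningMove A p]) :=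
  Classical.choose_spec (exists_forall_of_monotone_bool fun b => WinsWithin.monotone (p ++ [b]))
    n b h

lemma exists_hit_of_winsWithin {δ : ℕ → Bool}
    (hδ : ∀ i, δ (2 * i + 1) = winningMove A (seg δ (2 * i + 1))) {n k : ℕ}
    (h : WinsWithin A n (seg δ k)) : ∃ j ≤ k + n, A (seg δ j) = true := by
  induction n generalizing k with
  | zero =>
    cases h with
    | hit hA => exact ⟨k, by omega, hA⟩
  | succ n ih =>
    cases h with
    | hit hA => exact ⟨k, by omega, hA⟩
    | moveI _ hall =>
      obtain ⟨j, hj, hA⟩ := ih (k := k + 1) (seg_succ δ k ▸ hall (δ k))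
      exact ⟨j, by omega, hA⟩
    | moveII b hodd hb =>
      obtain ⟨i, rfl⟩ : Odd k := length_seg δ k ▸ hodd
      have hnext : WinsWithin A n (seg δ (2 * i + 1 + 1)) := by
        rw [seg_succ, hδ i]
        exact winsWithin_append_winningMove hb
      obtain ⟨j, hj, hA⟩ := ih hnext
      exact ⟨j, by omega, hA⟩

lemma not_winsWithin_append_avoidingMove {p : List Bool} (hp : ∀ n, ¬ WinsWithin A n p)
    (heven : Even p.length) (n : ℕ) : ¬ WinsWithin A n (p ++ [avoidingMove A p]) := by
  by_cases hfalse : ∃ m, WinsWithin A m (p ++ [false])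
  · obtain ⟨m, hm⟩ := hfalse
    have hmove : avoidingMove A p = true := by simpa [avoidingMove] using ⟨m, hm⟩
    rw [hmove]
    intro hn
    refine hp (max m n + 1) (.moveI heven fun b => ?_)
    cases b with
    | false => exact hm.mono (le_max_left m n)
    | true => exact hn.mono (le_max_right m n)
  · have hmove : avoidingMove A p = false := by simpa [avoidingMove] using hfalse
    rw [hmove]
    exact fun hn => hfalse ⟨n, hn⟩

lemma not_winsWithin_seg_of_avoidingMove {δ : ℕ → Bool}
    (hδ : ∀ i, δ (2 * i) = avoidingMove A (seg δ (2 * i))) (hroot : ∀ n, ¬ WinsWithin A n [])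
    (k : ℕ) : ∀ n, ¬ WinsWithin A n (seg δ k) := by
  induction k with
  | zero => simpa [seg] using hroot
  | succ k ih =>
    rw [seg_succ]
    rcases Nat.even_or_odd k with ⟨i, rfl⟩ | hodd
    · rw [← two_mul] at ih ⊢
      rw [hδ i]
      exact not_winsWithin_append_avoidingMove ih (by simp [length_seg])
    · exact fun n hn => ih (n + 1) (.moveII _ (by rwa [length_seg]) hn)

end Strategies

/-- Finite-strategy open determinacy for player II on Cantor space
(content of the equivalence FT ↔ Σ⁰₁-*Det^{II}_C in Theorem 9.5). -/
theorem finite_strategy_open_determinacy (A : List Bool → Bool)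
    (h : ∀ σ : List Bool → Bool, ∃ δ : ℕ → Bool,
      (∀ n, δ (2 * n) = σ (seg δ (2 * n))) ∧ ∃ k, A (seg δ k) = true) :
    ∃ (m : ℕ) (τ : List Bool → Bool), ∀ δ : ℕ → Bool,
      (∀ n, δ (2 * n + 1) = τ (seg δ (2 * n + 1))) →
      ∃ k ≤ m, A (seg δ k) = true := by
  by_cases hwin : ∃ N, WinsWithin A N []
  · obtain ⟨N, hN⟩ := hwin
    refine ⟨N, winningMove A, fun δ hδ => ?_⟩
    simpa using exists_hit_of_winsWithin hδ (k := 0) (by simpa [seg] using hN)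
  · rw [not_exists] at hwin
    obtain ⟨δ, hδ, k, hk⟩ := h (avoidingMove A)
    exact absurd (.hit hk) (not_winsWithin_seg_of_avoidingMove hδ hwin k 0)
end
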